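/- Diagonalization against countably many words: let S ⊆ {0,1}^ℕ be a countable set of infinite binary words containing no ultimately periodic word. Then there exists an infinite binary word w that is not ultimately periodic such that no finite-state transduct of w lies in S. -/

import Mathlib

/-! Baire category in Cantor space. The ultimately periodic words form a countable union of
closed sets with empty interior. For a transducer `A` and a word `u` that is not ultimately
periodic, the words that `A` transduces to `u` form a nowhere dense set: given a finite prefix
`p`, either some extension of `p` already makes the output of `A` deviate from `u`, or every
output after `p` is a prefix of `u`. In the second case a loop reachable after `p` that produces
output would make `u` ultimately periodic, so all such loops are silent and the output of `A` is
bounded on the whole cylinder of `p`. Up to renaming states there are countably many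
transducers, so the words to avoid form a meagre set, whose complement is nonempty. -/

/-- A sequential finite-state transducer with input alphabet `S`,
output alphabet `G`, a finite set of states, an initial state,
a transition function and an output function. -/
structure FST (S G : Type) where
  Q : Type
  [fin : Fintype Q]
  init : Q
  tr : Q → S → Q
  out : Q → S → List G

namespace FST

variable {S G : Type}

/-- Extended transition function on finite words. -/
def trL (A : FST S G) : A.Q → List S → A.Q
  | q, [] => q
  | q, a :: u => A.trL (A.tr q a) u

/-- Extended output function on finite words. -/
def outL (A : FST S G) : A.Q → List S → List G
  | _, [] => []
  | q, a :: u => A.out q a ++ A.outL (A.tr q a) u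

/-- Output produced from the initial state on the length-`m` prefix of the
infinite input word `w`. -/
def outOn (A : FST S G) (w : ℕ → S) (m : ℕ) : List G :=
  A.outL A.init ((List.range m).map w)

/-- `A.Transduces w u` : running `A` on the infinite word `w` produces the
infinite word `u` (every letter of `u` eventually appears in the output of a
sufficiently long prefix of `w`). -/
def Transduces (A : FST S G) (w : ℕ → S) (u : ℕ → G) : Prop :=
  ∀ n : ℕ, ∃ m : ℕ, (A.outOn w m)[n]? = some (u n)

end FST

/-- An infinite word (or function) is ultimately periodic. -/
def UltimatelyPeriodic {α : Type} (u : ℕ → α) : Prop :=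
  ∃ N q : ℕ, 1 ≤ q ∧ ∀ n, N ≤ n → u (n + q) = u n

attribute [local instance] FST.fin

section Words

variable {α : Type}

theorem List.IsPrefix.getElem?_eq_some {l₁ l₂ : List α} (h : l₁ <+: l₂) {i : ℕ}
    {a : α} (ha : l₁[i]? = some a) : l₂[i]? = some a := by
  obtain ⟨t, rfl⟩ := h
  rwa [List.getElem?_append_left (List.getElem?_eq_some_iff.1 ha).1]

def wordPrefix (w : ℕ → α) (n : ℕ) : List α := (List.range n).map w

@[simp]
theorem length_wordPrefix (w : ℕ → α) (n : ℕ) : (wordPrefix w n).length = n := by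
  simp [wordPrefix]

@[simp]
theorem getElem_wordPrefix (w : ℕ → α) (n i : ℕ) (hi : i < (wordPrefix w n).length) :
    (wordPrefix w n)[i] = w i := by
  simp [wordPrefix]

theorem wordPrefix_add (w : ℕ → α) (m n : ℕ) :
    wordPrefix w (m + n) = wordPrefix w m ++ wordPrefix (fun i => w (m + i)) n := by
  simp [wordPrefix, List.range_add, Function.comp_def]

theorem wordPrefix_prefix_of_le (w : ℕ → α) {m n : ℕ} (h : m ≤ n) :
    wordPrefix w m <+: wordPrefix w n := by
  obtain ⟨k, rfl⟩ := Nat.exists_eq_add_of_le h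
  rw [wordPrefix_add]
  exact List.prefix_append _ _

theorem wordPrefix_eq_iff {w : ℕ → α} {l : List α} :
    wordPrefix w l.length = l ↔ ∀ i (hi : i < l.length), w i = l[i] := by
  simp [List.ext_getElem_iff]

theorem wordPrefix_eq_wordPrefix_iff {w v : ℕ → α} {n : ℕ} :
    wordPrefix w n = wordPrefix v n ↔ w ∈ PiNat.cylinder v n := by
  simp [wordPrefix, List.map_inj_left]

def IsPrefixOfWord (l : List α) (u : ℕ → α) : Prop :=
  ∀ i (hi : i < l.length), l[i] = u i

theorem IsPrefixOfWord.getElem?_eq {l : List α} {u : ℕ → α} (h : IsPrefixOfWord l u) {i : ℕ}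
    (hi : i < l.length) : l[i]? = some (u i) := by
  rw [List.getElem?_eq_getElem hi, h i hi]

theorem ultimatelyPeriodic_of_forall_isPrefixOfWord {b o : List α} {u : ℕ → α} (ho : o ≠ [])
    (h : ∀ k, IsPrefixOfWord (b ++ (List.replicate k o).flatten) u) : UltimatelyPeriodic u := by
  have ho' : 0 < o.length := List.length_pos_iff.2 ho
  refine ⟨b.length, o.length, ho', fun t ht => ?_⟩
  set F := (List.replicate (t + 1) o).flatten
  have hF : t + 1 ≤ F.length := by simpa [F] using Nat.le_mul_of_pos_right (t + 1) ho'
  have h₁ : (b ++ (o ++ F))[t + o.length]? = F[t - b.length]? := by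
    rw [List.getElem?_append_right (by omega), List.getElem?_append_right (by omega)]
    congr 1
    omega
  have h₂ : (b ++ F)[t]? = F[t - b.length]? := List.getElem?_append_right ht
  have hu₁ : (b ++ (o ++ F))[t + o.length]? = some (u (t + o.length)) :=
    (show IsPrefixOfWord (b ++ (o ++ F)) u from h (t + 2)).getElem?_eq
      (by simp only [List.length_append]; omega)
  have hu₂ : (b ++ F)[t]? = some (u t) :=
    (show IsPrefixOfWord (b ++ F) u from h (t + 1)).getElem?_eq
      (by simp only [List.length_append]; omega)
  rw [h₁] at hu₁
  rw [h₂] at hu₂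
  exact Option.some.inj (hu₁.symm.trans hu₂)

end Words

section Cantor

open PiNat

variable {α : Type} [TopologicalSpace α] [DiscreteTopology α]

theorem isNowhereDense_of_forall_exists_append {s : Set (ℕ → α)}
    (h : ∀ p : List α, ∃ e, ∀ w, wordPrefix w (p ++ e).length = p ++ e → w ∉ s) :
    IsNowhereDense s := by
  refine Set.eq_empty_iff_forall_notMem.2 fun x hx => ?_
  obtain ⟨_, ⟨y, n, rfl⟩, hxy, hsub⟩ :=
    (isTopologicalBasis_cylinders fun _ => α).exists_subset_of_mem_open hx isOpen_interior
  obtain ⟨e, he⟩ := h (wordPrefix x n)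
  set l := wordPrefix x n ++ e
  let z : ℕ → α := fun i => l.getD i (x i)
  have hzl : wordPrefix z l.length = l :=
    wordPrefix_eq_iff.2 fun i hi => List.getD_eq_getElem _ _ hi
  have hzx : z ∈ cylinder x n := fun i hi => by
    simp [z, l, List.getD_eq_getElem?_getD, List.getElem?_append_left, hi]
  have hz : z ∈ closure s :=
    interior_subset (hsub ((mem_cylinder_iff_eq.1 hxy).symm ▸ hzx))
  obtain ⟨w, hwz, hws⟩ :=
    mem_closure_iff.1 hz _ (isOpen_cylinder _ z l.length) (self_mem_cylinder z l.length)
  exact he w ((wordPrefix_eq_wordPrefix_iff.2 hwz).trans hzl) hws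

theorem isNowhereDense_setOf_periodicFrom [Nontrivial α] (N : ℕ) {q : ℕ} (hq : 0 < q) :
    IsNowhereDense {w : ℕ → α | ∀ n, N ≤ n → w (n + q) = w n} := by
  obtain ⟨a, b, hab⟩ := exists_pair_ne α
  refine isNowhereDense_of_forall_exists_append fun p =>
    ⟨List.replicate (N + q) a ++ [b], fun w hw hper => hab ?_⟩
  have hw := wordPrefix_eq_iff.1 hw
  have ha : w (p.length + N) = a := by simpa [hq] using hw (p.length + N) (by simp)
  have hb : w (p.length + (N + q)) = b := by simpa using hw (p.length + (N + q)) (by simp)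
  rw [← ha, ← hb, ← Nat.add_assoc, hper _ (by omega)]

theorem isMeagre_setOf_ultimatelyPeriodic [Nontrivial α] :
    IsMeagre {w : ℕ → α | UltimatelyPeriodic w} := by
  have : {w : ℕ → α | UltimatelyPeriodic w} =
      ⋃ N, ⋃ q ∈ {q : ℕ | 0 < q}, {w | ∀ n, N ≤ n → w (n + q) = w n} := by
    ext w
    simp [UltimatelyPeriodic, Nat.one_le_iff_ne_zero, Nat.pos_iff_ne_zero]
  rw [this]
  exact isMeagre_iUnion fun N => isMeagre_biUnion (Set.to_countable _) fun q hq =>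
    (isNowhereDense_setOf_periodicFrom N hq).isMeagre

end Cantor

namespace FST

variable {S G : Type}

theorem trL_append (A : FST S G) (q : A.Q) (x y : List S) :
    A.trL q (x ++ y) = A.trL (A.trL q x) y := by
  induction x generalizing q with
  | nil => rfl
  | cons a x ih => exact ih _

theorem outL_append (A : FST S G) (q : A.Q) (x y : List S) :
    A.outL q (x ++ y) = A.outL q x ++ A.outL (A.trL q x) y := by
  induction x generalizing q with
  | nil => rfl
  | cons a x ih => simp [outL, trL, ih]

theorem outL_prefix_outL (A : FST S G) (q : A.Q) {x y : List S} (h : x <+: y) :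
    A.outL q x <+: A.outL q y := by
  obtain ⟨z, rfl⟩ := h
  rw [outL_append]
  exact List.prefix_append _ _

theorem outOn_eq (A : FST S G) (w : ℕ → S) (m : ℕ) :
    A.outOn w m = A.outL A.init (wordPrefix w m) := rfl

theorem outOn_prefix_outOn (A : FST S G) (w : ℕ → S) {m n : ℕ} (h : m ≤ n) :
    A.outOn w m <+: A.outOn w n :=
  A.outL_prefix_outL _ (wordPrefix_prefix_of_le w h)

theorem outL_flatten_replicate (A : FST S G) {q : A.Q} {y : List S} (hy : A.trL q y = q)
    (k : ℕ) : A.outL q (List.replicate k y).flatten = (List.replicate k (A.outL q y)).flatten := by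
  induction k with
  | zero => rfl
  | succ k ih => rw [List.replicate_succ, List.flatten_cons, outL_append, hy, ih]; rfl

def toDFA (A : FST S G) : DFA S A.Q := ⟨A.tr, A.init, ∅⟩

theorem trL_eq_evalFrom (A : FST S G) (q : A.Q) (x : List S) :
    A.trL q x = A.toDFA.evalFrom q x := by
  induction x generalizing q with
  | nil => rfl
  | cons a x ih => exact ih _

theorem exists_length_outL_le_mul [Finite S] (A : FST S G) :
    ∃ C, ∀ q x, (A.outL q x).length ≤ x.length * C := by
  obtain ⟨C, hC⟩ := Finite.bddAbove_range fun qa : A.Q × S => (A.out qa.1 qa.2).length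
  refine ⟨C, fun q x => ?_⟩
  induction x generalizing q with
  | nil => simp [outL]
  | cons a x ih =>
    have := hC ⟨(q, a), rfl⟩
    have := ih (A.tr q a)
    simp only [outL, List.length_append, List.length_cons]
    nlinarith

/-- Cutting a silent loop out of the input does not change the output, and inputs shorter than
the number of states have bounded output. -/
theorem exists_length_outL_le [Finite S] (A : FST S G) {q : A.Q}
    (h : ∀ x y, A.trL (A.trL q x) y = A.trL q x → A.outL (A.trL q x) y = []) :
    ∃ M, ∀ e, (A.outL q e).length ≤ M := by
  obtain ⟨C, hC⟩ := A.exists_length_outL_le_mul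
  refine ⟨Fintype.card A.Q * C, fun e => ?_⟩
  induction hn : e.length using Nat.strong_induction_on generalizing e with
  | _ n ih =>
    by_cases hlen : Fintype.card A.Q ≤ e.length
    · obtain ⟨q', a, b, c, rfl, -, hb, ha, hloop, -⟩ := A.toDFA.evalFrom_split hlen rfl
      rw [← trL_eq_evalFrom] at ha hloop
      subst ha
      have hcut : A.outL q (a ++ b ++ c) = A.outL q (a ++ c) := by
        rw [outL_append, outL_append, trL_append, hloop, h a b hloop, List.append_nil,
          outL_append]
      rw [hcut]
      exact ih _ (by simp [← hn, List.length_pos_iff.2 hb]) _ rfl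
    · exact (hC q e).trans (Nat.mul_le_mul_right _ (by omega))

theorem ultimatelyPeriodic_of_productive_loop (A : FST S G) {q : A.Q} {b : List G}
    {u : ℕ → G} (h : ∀ e, IsPrefixOfWord (b ++ A.outL q e) u) {x y : List S}
    (hloop : A.trL (A.trL q x) y = A.trL q x) (hy : A.outL (A.trL q x) y ≠ []) :
    UltimatelyPeriodic u := by
  refine ultimatelyPeriodic_of_forall_isPrefixOfWord (b := b ++ A.outL q x) hy fun k => ?_
  have := h (x ++ (List.replicate k y).flatten)
  rwa [outL_append, outL_flatten_replicate A hloop, ← List.append_assoc] at this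

theorem not_transduces_of_not_isPrefixOfWord (A : FST S G) {w : ℕ → S} {u : ℕ → G}
    {l : List S} (hw : wordPrefix w l.length = l) (hl : ¬ IsPrefixOfWord (A.outL A.init l) u) :
    ¬ A.Transduces w u := by
  intro hT
  rw [← hw, ← outOn_eq] at hl
  simp only [IsPrefixOfWord, not_forall] at hl
  obtain ⟨i, hi, hne⟩ := hl
  obtain ⟨m, hm⟩ := hT i
  apply hne
  rcases le_total m l.length with h | h
  · have := (A.outOn_prefix_outOn w h).getElem?_eq_some hm
    rw [List.getElem?_eq_getElem hi] at this
    exact Option.some.inj this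
  · have := (A.outOn_prefix_outOn w h).getElem?_eq_some (List.getElem?_eq_getElem hi)
    rw [hm] at this
    exact (Option.some.inj this).symm

theorem not_transduces_of_forall_length_le (A : FST S G) {w : ℕ → S} {u : ℕ → G}
    {p : List S} (hw : wordPrefix w p.length = p) {M : ℕ}
    (hM : ∀ e, (A.outL A.init (p ++ e)).length ≤ M) : ¬ A.Transduces w u := by
  intro hT
  obtain ⟨m, hm⟩ := hT M
  have hlen : (A.outOn w m).length ≤ M := by
    refine (A.outOn_prefix_outOn w (Nat.le_add_left m p.length)).length_le.trans ?_
    rw [outOn_eq, wordPrefix_add, hw]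
    exact hM _
  rw [List.getElem?_eq_none hlen] at hm
  cases hm

theorem isNowhereDense_setOf_transduces [Finite S] [TopologicalSpace S] [DiscreteTopology S]
    (A : FST S G) {u : ℕ → G} (hu : ¬ UltimatelyPeriodic u) :
    IsNowhereDense {w | A.Transduces w u} := by
  refine isNowhereDense_of_forall_exists_append fun p => ?_
  by_cases h : ∃ e, ¬ IsPrefixOfWord (A.outL A.init (p ++ e)) u
  · obtain ⟨e, he⟩ := h
    exact ⟨e, fun w hw => A.not_transduces_of_not_isPrefixOfWord hw he⟩
  push Not at h
  set q := A.trL A.init p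
  have hsilent : ∀ x y, A.trL (A.trL q x) y = A.trL q x → A.outL (A.trL q x) y = [] := by
    intro x y hloop
    by_contra hy
    refine hu (A.ultimatelyPeriodic_of_productive_loop (b := A.outL A.init p) (fun e => ?_)
      hloop hy)
    rw [← outL_append]
    exact h e
  obtain ⟨M, hM⟩ := A.exists_length_outL_le hsilent
  refine ⟨[], fun w hw => A.not_transduces_of_forall_length_le (M := (A.outL A.init p).length + M)
    (by simpa using hw) fun e => ?_⟩
  rw [outL_append, List.length_append]
  exact Nat.add_le_add_left (hM e) _

end FST

/-- Transducers with state set `Fin n`; unlike `FST S G`, this type is countable. -/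
abbrev FinFST (S G : Type) := Σ n : ℕ, (Fin n → S → Fin n) × (Fin n → S → List G) × Fin n

def FinFST.toFST {S G : Type} (B : FinFST S G) : FST S G where
  Q := Fin B.1
  init := B.2.2.2
  tr := B.2.1
  out := B.2.2.1

theorem FST.exists_finFST_transduces_iff {S G : Type} (A : FST S G) :
    ∃ B : FinFST S G, ∀ w u, B.toFST.Transduces w u ↔ A.Transduces w u := by
  let e := Fintype.equivFin A.Q
  let B : FinFST S G :=
    ⟨_, fun i a => e (A.tr (e.symm i) a), fun i a => A.out (e.symm i) a, e A.init⟩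
  have hB : ∀ x q, B.toFST.outL (e q) x = A.outL q x := by
    intro x
    induction x with
    | nil => intro q; rfl
    | cons a x ih => intro q; simp [outL, FinFST.toFST, B, ← ih]
  have hinit : B.toFST.init = e A.init := rfl
  exact ⟨B, fun w u => by simp only [FST.Transduces, FST.outOn, hinit, hB]⟩

/-- Diagonalization against countably many words: for any countable set `Sset`
of infinite binary words containing no ultimately periodic word, there is an
infinite binary word `w`, not ultimately periodic, none of whose finite-state
transducts lies in `Sset`. -/
theorem diagonalization_against_countable (Sset : Set (ℕ → Bool))
    (hcount : Sset.Countable)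
    (hS : ∀ u ∈ Sset, ¬ UltimatelyPeriodic u) :
    ∃ w : ℕ → Bool, ¬ UltimatelyPeriodic w ∧
      ∀ u ∈ Sset, ∀ A : FST Bool Bool, ¬ A.Transduces w u := by
  let bad : Set (ℕ → Bool) := {w | UltimatelyPeriodic w} ∪
    ⋃ u ∈ Sset, ⋃ B : FinFST Bool Bool, {w | B.toFST.Transduces w u}
  have hbad : IsMeagre bad := isMeagre_setOf_ultimatelyPeriodic.union <|
    isMeagre_biUnion hcount fun u hu => isMeagre_iUnion fun B =>
      (B.toFST.isNowhereDense_setOf_transduces (hS u hu)).isMeagre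
  obtain ⟨w, hw⟩ := (dense_of_mem_residual hbad).nonempty
  refine ⟨w, fun h => hw (Or.inl h), fun u hu A hA => hw (Or.inr ?_)⟩
  obtain ⟨B, hB⟩ := A.exists_finFST_transduces_iff
  exact Set.mem_biUnion hu (Set.mem_iUnion.2 ⟨B, (hB w u).2 hA⟩)
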